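/- Assume 0 < c ≤ c₀. Then v_L'(L) → 0 as L → +∞; consequently −μ(A(L)) v_L'(L) → 0 as L → +∞. -/

import Mathlib

open Set Filter Topology
open scoped ENNReal NNReal

noncomputable section

/-- An admissible initial datum on `[0, h₀]`:  `u₀ ∈ C²([0,h₀])`, `u₀'(0) = u₀(h₀) = 0`,
`u₀'(h₀) < 0` and `u₀ > 0` on `[0, h₀)`. -/
def Admissible (h₀ : ℝ) (u₀ : ℝ → ℝ) : Prop :=
  ContDiffOn ℝ 2 u₀ (Icc 0 h₀) ∧ deriv u₀ 0 = 0 ∧ u₀ h₀ = 0 ∧ deriv u₀ h₀ < 0 ∧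
    ∀ x ∈ Ico (0:ℝ) h₀, 0 < u₀ x

/-- The semi-wave with speed `c₀`: a positive solution `q` of
`d q'' + c₀ q' + a q - b q² = 0` on `(-∞,0)`, `q(0) = 0`, `-μ(a) q'(0) = c₀`. -/
def IsSemiWave (d b a μa c₀ : ℝ) (q : ℝ → ℝ) : Prop :=
  (∀ x : ℝ, x < 0 → 0 < q x) ∧
  ContDiffOn ℝ 2 q (Iic 0) ∧
  (∀ x : ℝ, x < 0 → d * deriv (deriv q) x + c₀ * deriv q x + a * q x - b * q x ^ 2 = 0) ∧
  q 0 = 0 ∧ -μa * deriv q 0 = c₀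

/-- A positive solution of the problem `-d v'' - c v' = A(x) v - b v²` on `(-∞, L)`,
`v(L) = 0` (problem (1.5) in the paper). -/
def IsVSol (d b c : ℝ) (A : ℝ → ℝ) (L : ℝ) (v : ℝ → ℝ) : Prop :=
  (∀ x : ℝ, x < L → 0 < v x) ∧
  ContDiffOn ℝ 2 v (Iic L) ∧
  (∀ x : ℝ, x < L → -(d * deriv (deriv v) x) - c * deriv v x = A x * v x - b * v x ^ 2) ∧
  v L = 0

/-- A positive solution of the two-point boundary value problem
`-d ψ'' - c ψ' = A(x) ψ - b ψ²` on `(-l, L₁)`, `ψ(-l) = M`, `ψ(L₁) = 0`. -/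
def IsPsiSol (d b c : ℝ) (A : ℝ → ℝ) (l L₁ M : ℝ) (ψ : ℝ → ℝ) : Prop :=
  (∀ x : ℝ, -l < x → x < L₁ → 0 < ψ x) ∧
  ContDiffOn ℝ 2 ψ (Icc (-l) L₁) ∧
  (∀ x : ℝ, -l < x → x < L₁ →
    -(d * deriv (deriv ψ) x) - c * deriv ψ x = A x * ψ x - b * ψ x ^ 2) ∧
  ψ (-l) = M ∧ ψ L₁ = 0

/-- A classical solution `(u, h)` of the free boundary problem (FBP) on the time
interval `(0, T₀)` (with `T₀ ∈ (0, ∞]`), with diffusion `d`, crowding `b`, shifting speed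
`c`, initial habitat `[0, h₀]`, environment function `A`, spreading coefficient `μf`
and initial datum `u₀`. -/
def SolOn (d b c h₀ : ℝ) (A μf : ℝ → ℝ) (u₀ : ℝ → ℝ) (T₀ : ℝ≥0∞)
    (u : ℝ → ℝ → ℝ) (h : ℝ → ℝ) : Prop :=
  h 0 = h₀ ∧
  ContinuousOn h {t : ℝ | 0 ≤ t ∧ ENNReal.ofReal t < T₀} ∧
  (∀ t : ℝ, 0 < t → ENNReal.ofReal t < T₀ → HasDerivAt h (deriv h t) t) ∧
  ContinuousOn (fun p : ℝ × ℝ => u p.1 p.2)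
    {p : ℝ × ℝ | 0 ≤ p.2 ∧ ENNReal.ofReal p.2 < T₀ ∧ p.1 ∈ Icc 0 (h p.2)} ∧
  (∀ x ∈ Icc (0:ℝ) h₀, u x 0 = u₀ x) ∧
  (∀ t x : ℝ, 0 < t → ENNReal.ofReal t < T₀ → 0 < x → x < h t →
    HasDerivAt (fun s => u x s)
      (d * deriv (fun y => deriv (fun z => u z t) y) x
        + A (x - c * t) * u x t - b * u x t ^ 2) t) ∧
  (∀ t : ℝ, 0 < t → ENNReal.ofReal t < T₀ → deriv (fun y => u y t) 0 = 0) ∧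
  (∀ t : ℝ, 0 < t → ENNReal.ofReal t < T₀ → u (h t) t = 0) ∧
  (∀ t : ℝ, 0 < t → ENNReal.ofReal t < T₀ →
    deriv h t = -μf (A (h t - c * t)) * deriv (fun y => u y t) (h t))


set_option maxHeartbeats 1000000 in
lemma my_infra {L : ℝ} {v : ℝ → ℝ} (h : ContDiffOn ℝ 2 v (Iic L)) :
    (∀ x, x < L → HasDerivAt v (deriv v x) x) ∧
      (∀ x, x < L → HasDerivAt (deriv v) (deriv (deriv v) x) x) := by
  have h' : ContDiffOn ℝ 2 v (Iio L) := h.mono Iio_subset_Iic_self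
  have hd : ContDiffOn ℝ 1 (deriv v) (Iio L) :=
    h'.deriv_of_isOpen isOpen_Iio (by norm_num)
  constructor
  · intro x hx
    exact ((h'.differentiableOn (by norm_num)).differentiableAt (Iio_mem_nhds hx)).hasDerivAt
  · intro x hx
    exact ((hd.differentiableOn (by norm_num)).differentiableAt (Iio_mem_nhds hx)).hasDerivAt

set_option maxHeartbeats 1000000 in
lemma my_sdt {g G : ℝ → ℝ} {x s ε : ℝ} (hε : 0 < ε)
    (hg : ∀ y ∈ Set.Ioo (x - ε) (x + ε), HasDerivAt g (G y) y)
    (hG : HasDerivAt G s x) (hmax : IsLocalMax g x) : G x = 0 ∧ s ≤ 0 := by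
  have hxmem : x ∈ Set.Ioo (x - ε) (x + ε) := by constructor <;> linarith
  have hGx : G x = 0 := by
    rw [← (hg x hxmem).deriv]; exact hmax.deriv_eq_zero
  refine ⟨hGx, ?_⟩
  by_contra hs
  push_neg at hs
  have T : Tendsto (slope G x) (𝓝[≠] x) (𝓝 s) := hasDerivAt_iff_tendsto_slope.mp hG
  have T' : Tendsto (slope G x) (𝓝[>] x) (𝓝 s) :=
    T.mono_left (nhdsWithin_mono x fun y (hy : y ∈ Ioi x) => ne_of_gt hy)
  have hev : ∀ᶠ y in 𝓝[>] x, 0 < G y := by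
    filter_upwards [T' (Ioi_mem_nhds hs), self_mem_nhdsWithin] with y h1 (h2 : x < y)
    have : 0 < (G y - G x) / (y - x) := by
      have := mem_preimage.mp h1
      rwa [slope_def_field] at this
    rw [hGx, sub_zero] at this
    have h3 : 0 < y - x := by linarith
    nlinarith [mul_pos this h3, div_mul_cancel₀ (G y) (ne_of_gt h3)]
  obtain ⟨u1, hu1, hI⟩ := mem_nhdsGT_iff_exists_Ioo_subset.mp hev
  obtain ⟨δ₂, hδ₂, hm⟩ := Metric.eventually_nhds_iff.mp hmax
  set δ := min (min (u1 - x) δ₂) ε / 2 with hδdef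
  have hu1x : 0 < u1 - x := sub_pos.mpr hu1
  have hδ : 0 < δ := by positivity
  have hδu1 : δ < u1 - x := by
    have : min (min (u1 - x) δ₂) ε ≤ u1 - x := le_trans (min_le_left _ _) (min_le_left _ _)
    simp only [hδdef]; linarith
  have hδδ₂ : δ < δ₂ := by
    have : min (min (u1 - x) δ₂) ε ≤ δ₂ := le_trans (min_le_left _ _) (min_le_right _ _)
    simp only [hδdef]; linarith
  have hδε : δ < ε := by
    have : min (min (u1 - x) δ₂) ε ≤ ε := min_le_right _ _
    simp only [hδdef]; linarith
  have hsub : Icc x (x + δ) ⊆ Set.Ioo (x - ε) (x + ε) := by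
    intro y hy; exact ⟨by cases hy; linarith, by cases hy; linarith⟩
  have hmono : StrictMonoOn g (Icc x (x + δ)) := by
    apply strictMonoOn_of_deriv_pos (convex_Icc _ _)
    · intro y hy
      exact ((hg y (hsub hy)).differentiableAt).continuousAt.continuousWithinAt
    · intro y hy
      rw [interior_Icc] at hy
      rw [(hg y (hsub (Ioo_subset_Icc_self hy))).deriv]
      exact hI ⟨hy.1, by cases hy; linarith⟩
  have h1 : g x < g (x + δ) :=
    hmono ⟨le_refl x, by linarith⟩ ⟨by linarith, le_refl _⟩ (by linarith)
  have h2 : g (x + δ) ≤ g x := hm (by rw [Real.dist_eq]; rw [abs_of_pos] <;> linarith)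
  linarith

set_option maxHeartbeats 1000000 in
lemma my_bar_ineq {d b c a lam u : ℝ} (hd : 0 < d) (hb : 0 < b) (hc : 0 < c) (ha : 0 < a)
    (hlam : b * lam = 24 * d + 4 * c + 2 * a) (hu1 : -1 < u) (hu2 : u < 1) :
    d * (4 * lam * (1 + 5 * u ^ 2) * ((1 - u ^ 2) ^ 4)⁻¹)
      + c * (4 * lam * u * ((1 - u ^ 2) ^ 3)⁻¹)
      + a * (lam * ((1 - u ^ 2) ^ 2)⁻¹)
      ≤ b * (lam * ((1 - u ^ 2) ^ 2)⁻¹) ^ 2 := by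
  have hs : 0 < 1 - u ^ 2 := by nlinarith
  have hlampos : 0 < lam := by nlinarith
  have hs1 : 1 - u ^ 2 ≤ 1 := by nlinarith
  have e2 : 4 * c * lam * u * (1 - u ^ 2) ≤ 4 * c * lam := by
    nlinarith [mul_nonneg (mul_nonneg (by linarith : (0:ℝ) ≤ 1 - u) hs.le)
        (mul_pos hc hlampos).le,
      mul_nonneg (by linarith : (0:ℝ) ≤ 1 - (1 - u ^ 2)) (mul_pos hc hlampos).le]
  have key : 4 * d * lam * (1 + 5 * u ^ 2) + 4 * c * lam * u * (1 - u ^ 2)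
      + a * lam * (1 - u ^ 2) ^ 2 ≤ b * lam ^ 2 := by
    have e1 : 4 * d * lam * (1 + 5 * u ^ 2) ≤ 24 * d * lam := by
      nlinarith [mul_nonneg (mul_nonneg hd.le hlampos.le) (by nlinarith : (0:ℝ) ≤ 1 - u ^ 2)]
    have e3 : a * lam * (1 - u ^ 2) ^ 2 ≤ 2 * a * lam := by
      nlinarith [mul_nonneg (mul_nonneg ha.le hlampos.le)
        (by nlinarith : (0:ℝ) ≤ 1 - (1 - u ^ 2) ^ 2)]
    have hbl : b * lam ^ 2 = 24 * d * lam + 4 * c * lam + 2 * a * lam := by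
      have : b * lam ^ 2 = (b * lam) * lam := by ring
      rw [this, hlam]; ring
    linarith
  have heq : b * (lam * ((1 - u ^ 2) ^ 2)⁻¹) ^ 2
      - (d * (4 * lam * (1 + 5 * u ^ 2) * ((1 - u ^ 2) ^ 4)⁻¹)
        + c * (4 * lam * u * ((1 - u ^ 2) ^ 3)⁻¹)
        + a * (lam * ((1 - u ^ 2) ^ 2)⁻¹))
      = (b * lam ^ 2 - (4 * d * lam * (1 + 5 * u ^ 2) + 4 * c * lam * u * (1 - u ^ 2)
          + a * lam * (1 - u ^ 2) ^ 2)) / (1 - u ^ 2) ^ 4 := by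
    field_simp
  have hnn := div_nonneg (by linarith : (0:ℝ) ≤ b * lam ^ 2 - (4 * d * lam * (1 + 5 * u ^ 2)
      + 4 * c * lam * u * (1 - u ^ 2) + a * lam * (1 - u ^ 2) ^ 2))
    (by positivity : (0:ℝ) ≤ (1 - u ^ 2) ^ 4)
  linarith [heq ▸ hnn]

set_option maxHeartbeats 1000000 in
lemma my_barrier {d b c a L p : ℝ} {A v : ℝ → ℝ}
    (hd : 0 < d) (hb : 0 < b) (hc : 0 < c) (ha : 0 < a)
    (hA : ∀ x, A x ≤ a)
    (hpos : ∀ x, x < L → 0 < v x)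
    (hC : ContDiffOn ℝ 2 v (Iic L))
    (hode : ∀ x, x < L → -(d * deriv (deriv v) x) - c * deriv v x
      = A x * v x - b * v x ^ 2)
    (hpL : p + 1 < L) :
    v p ≤ (24 * d + 4 * c + 2 * a) / b := by
  obtain ⟨hD1, hD2⟩ := my_infra hC
  set lam : ℝ := (24 * d + 4 * c + 2 * a) / b with hlamdef
  have hlampos : 0 < lam := by positivity
  have hblam : b * lam = 24 * d + 4 * c + 2 * a := by
    rw [hlamdef]; field_simp
  set φ : ℝ → ℝ := fun x => lam * ((1 - (x - p) ^ 2) ^ 2)⁻¹ with hφdef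
  set φ₁ : ℝ → ℝ := fun x => 4 * lam * (x - p) * ((1 - (x - p) ^ 2) ^ 3)⁻¹ with hφ₁def
  set φ₂ : ℝ → ℝ := fun x => 4 * lam * (1 + 5 * (x - p) ^ 2) * ((1 - (x - p) ^ 2) ^ 4)⁻¹
    with hφ₂def
  have hspos : ∀ x ∈ Ioo (p - 1) (p + 1), 0 < 1 - (x - p) ^ 2 := by
    intro x hx; obtain ⟨h1, h2⟩ := hx; nlinarith
  have hbase : ∀ x : ℝ, HasDerivAt (fun x => 1 - (x - p) ^ 2) (-(2 * (x - p))) x := by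
    intro x
    have h1 : HasDerivAt (fun x : ℝ => x - p) 1 x := (hasDerivAt_id x).sub_const p
    have h2 := (h1.pow 2).const_sub 1
    refine h2.congr_deriv ?_
    push_cast; ring
  have hasφ : ∀ x ∈ Ioo (p - 1) (p + 1), HasDerivAt φ (φ₁ x) x := by
    intro x hx
    have hs := hspos x hx
    have h2 := (hbase x).pow 2
    have h3 := (h2.inv (pow_ne_zero _ hs.ne')).const_mul lam
    refine h3.congr_deriv ?_
    rw [hφ₁def]
    simp only [Pi.pow_apply, Pi.inv_apply]
    field_simp
    ring
  have hasφ₁ : ∀ x ∈ Ioo (p - 1) (p + 1), HasDerivAt φ₁ (φ₂ x) x := by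
    intro x hx
    have hs := hspos x hx
    have hnum : HasDerivAt (fun x : ℝ => 4 * lam * (x - p)) (4 * lam) x := by
      have h1 : HasDerivAt (fun x : ℝ => x - p) 1 x := (hasDerivAt_id x).sub_const p
      refine (h1.const_mul (4 * lam)).congr_deriv ?_; ring
    have hden := ((hbase x).pow 3).inv (pow_ne_zero _ hs.ne')
    have h4 := hnum.mul hden
    refine h4.congr_deriv ?_
    rw [hφ₂def]
    simp only [Pi.pow_apply, Pi.inv_apply]
    field_simp
    ring
  have hineq : ∀ x ∈ Ioo (p - 1) (p + 1),
      d * φ₂ x + c * φ₁ x + a * φ x ≤ b * φ x ^ 2 := by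
    intro x hx
    obtain ⟨hx1, hx2⟩ := hx
    exact my_bar_ineq hd hb hc ha hblam (by linarith) (by linarith)
  -- suppose for contradiction that v p > lam
  by_contra hvp
  push_neg at hvp
  -- maximum of v on the closed interval
  have hIccsub : Icc (p - 1) (p + 1) ⊆ Iic L := fun y hy => le_trans hy.2 (by linarith)
  have hvc : ContinuousOn v (Icc (p - 1) (p + 1)) := hC.continuousOn.mono hIccsub
  obtain ⟨xm, hxm, hxmax⟩ := isCompact_Icc.exists_isMaxOn
    (Set.nonempty_Icc.mpr (by linarith)) hvc
  have hxmax' : ∀ y ∈ Icc (p - 1) (p + 1), v y ≤ v xm := fun y hy => hxmax hy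
  have hMv : lam < v xm := lt_of_lt_of_le hvp (hxmax' p ⟨by linarith, by linarith⟩)
  have hMvpos : 0 < v xm := lt_trans hlampos hMv
  -- choice of inner radius u₀
  set σ : ℝ := min 1 (Real.sqrt (lam / v xm)) with hσdef
  have hσpos : 0 < σ := lt_min one_pos (Real.sqrt_pos.mpr (by positivity))
  have hσ1 : σ ≤ 1 := min_le_left _ _
  set u₀ : ℝ := Real.sqrt (1 - σ / 2) with hu₀def
  have hu₀sq : u₀ ^ 2 = 1 - σ / 2 := Real.sq_sqrt (by linarith)
  have hu₀pos : 0 < u₀ := Real.sqrt_pos.mpr (by linarith)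
  have hu₀lt1 : u₀ < 1 := by nlinarith
  have hKsub : Icc (p - u₀) (p + u₀) ⊆ Ioo (p - 1) (p + 1) := by
    intro y hy; exact ⟨by cases hy; linarith, by cases hy; linarith⟩
  -- maximum of g = v - φ on K
  have hφcont : ∀ y ∈ Icc (p - u₀) (p + u₀), ContinuousWithinAt φ (Icc (p - u₀) (p + u₀)) y :=
    fun y hy => ((hasφ y (hKsub hy)).differentiableAt).continuousAt.continuousWithinAt
  have hgc : ContinuousOn (fun x => v x - φ x) (Icc (p - u₀) (p + u₀)) :=
    ContinuousOn.sub (hvc.mono (fun y hy => Ioo_subset_Icc_self (hKsub hy))) hφcont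
  obtain ⟨xs, hxs, hgmax⟩ := isCompact_Icc.exists_isMaxOn
    (Set.nonempty_Icc.mpr (by linarith)) hgc
  have hgmax' : ∀ y ∈ Icc (p - u₀) (p + u₀), v y - φ y ≤ v xs - φ xs := fun y hy => hgmax hy
  have hφp : φ p = lam := by rw [hφdef]; norm_num
  have hpK : p ∈ Icc (p - u₀) (p + u₀) := ⟨by linarith, by linarith⟩
  have hgp : 0 < v xs - φ xs := by
    have := hgmax' p hpK
    rw [hφp] at this
    linarith
  -- g y ≤ g xs for all y in the open interval
  have hclaim : ∀ y ∈ Ioo (p - 1) (p + 1), v y - φ y ≤ v xs - φ xs := by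
    intro y hy
    rcases le_or_gt |y - p| u₀ with hcase | hcase
    · exact hgmax' y ⟨by cases abs_le.mp hcase; linarith, by cases abs_le.mp hcase; linarith⟩
    · have hsy := hspos y hy
      have hsyu : 1 - (y - p) ^ 2 < σ / 2 := by
        have : u₀ ^ 2 < (y - p) ^ 2 := by
          nlinarith [sq_abs (y - p), abs_nonneg (y - p)]
        linarith [hu₀sq ▸ this]
      have hsylt : 1 - (y - p) ^ 2 < Real.sqrt (lam / v xm) :=
        lt_of_lt_of_le (by linarith [min_le_right (1:ℝ) (Real.sqrt (lam / v xm))])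
          (min_le_right _ _)
      have hsq : (1 - (y - p) ^ 2) ^ 2 < lam / v xm :=
        (Real.lt_sqrt hsy.le).mp hsylt
      have hφyval : φ y = lam * ((1 - (y - p) ^ 2) ^ 2)⁻¹ := by simp only [hφdef]
      have hs2pos : 0 < (1 - (y - p) ^ 2) ^ 2 := by positivity
      have h1 : (1 - (y - p) ^ 2) ^ 2 * v xm < lam := (lt_div_iff₀ hMvpos).mp hsq
      have hφy : v xm < φ y := by
        rw [hφyval, ← div_eq_mul_inv]
        exact (lt_div_iff₀ hs2pos).mpr (by nlinarith)
      have hvy : v y ≤ v xm := hxmax' y (Ioo_subset_Icc_self hy)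
      linarith
  -- xs is a local max of g
  have hxsIoo : xs ∈ Ioo (p - 1) (p + 1) := hKsub hxs
  have hloc : IsLocalMax (fun x => v x - φ x) xs :=
    Filter.eventually_of_mem (isOpen_Ioo.mem_nhds hxsIoo) hclaim
  set ε : ℝ := min (xs - (p - 1)) ((p + 1) - xs) with hεdef
  have hε : 0 < ε := lt_min (by linarith [hxsIoo.1]) (by linarith [hxsIoo.2])
  have hεsub : Ioo (xs - ε) (xs + ε) ⊆ Ioo (p - 1) (p + 1) := by
    intro y hy
    obtain ⟨h1, h2⟩ := hy
    constructor
    · have := min_le_left (xs - (p - 1)) ((p + 1) - xs); simp only [hεdef] at h1 ⊢; linarith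
    · have := min_le_right (xs - (p - 1)) ((p + 1) - xs); simp only [hεdef] at h2 ⊢; linarith
  have hxsL : xs < L := by
    have := hxsIoo.2; linarith
  have hgderiv : ∀ y ∈ Ioo (xs - ε) (xs + ε),
      HasDerivAt (fun x => v x - φ x) (deriv v y - φ₁ y) y := by
    intro y hy
    have hyIoo := hεsub hy
    exact (hD1 y (by linarith [hyIoo.2])).sub (hasφ y hyIoo)
  have hGd : HasDerivAt (fun y => deriv v y - φ₁ y)
      (deriv (deriv v) xs - φ₂ xs) xs :=
    (hD2 xs hxsL).sub (hasφ₁ xs hxsIoo)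
  obtain ⟨hG0, hs2⟩ := my_sdt hε hgderiv hGd hloc
  have hveq : deriv v xs = φ₁ xs := by linarith [sub_eq_zero.mp hG0]
  have hvv : deriv (deriv v) xs ≤ φ₂ xs := by linarith
  -- contradiction with the equation at xs
  have hodexs := hode xs hxsL
  have hvpos := hpos xs hxsL
  have hAxs := hA xs
  have hkey := hineq xs hxsIoo
  have hφxs : lam ≤ φ xs := by
    have hs := hspos xs hxsIoo
    have hs1 : (1 - (xs - p) ^ 2) ^ 2 ≤ 1 := by nlinarith
    have : (1:ℝ) ≤ ((1 - (xs - p) ^ 2) ^ 2)⁻¹ := by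
      rw [le_inv_comm₀]
      · linarith
      · norm_num
      · positivity
    calc lam = lam * 1 := by ring
      _ ≤ lam * ((1 - (xs - p) ^ 2) ^ 2)⁻¹ := by nlinarith
      _ = φ xs := by simp only [hφdef]
  have hvφ : φ xs < v xs := by linarith
  -- chain of inequalities
  have h1 : b * v xs ^ 2 - a * v xs ≤ d * φ₂ xs + c * φ₁ xs := by
    have hAv : A xs * v xs ≤ a * v xs := mul_le_mul_of_nonneg_right hAxs hvpos.le
    have hdvv : d * deriv (deriv v) xs ≤ d * φ₂ xs :=
      mul_le_mul_of_nonneg_left hvv hd.le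
    have := hveq
    nlinarith
  have h2 : d * φ₂ xs + c * φ₁ xs ≤ b * φ xs ^ 2 - a * φ xs := by
    have := mul_pos ha hlampos
    nlinarith
  have h3 : b * φ xs ^ 2 - a * φ xs < b * v xs ^ 2 - a * v xs := by
    have hfac : 0 < b * (v xs + φ xs) - a := by nlinarith
    nlinarith [mul_pos (sub_pos.mpr hvφ) hfac]
  linarith

set_option maxHeartbeats 1000000 in
lemma my_bound {d b c a a₀ l₀ L : ℝ} {A v : ℝ → ℝ}
    (hd : 0 < d) (hb : 0 < b) (hc : 0 < c) (ha : 0 < a) (ha₀ : a₀ < 0) (hl₀ : 0 < l₀)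
    (hA : ∀ x, A x ≤ a) (hApos : ∀ ξ : ℝ, l₀ ≤ ξ → A ξ = a₀)
    (hpos : ∀ x, x < L → 0 < v x)
    (hC : ContDiffOn ℝ 2 v (Iic L))
    (hode : ∀ x, x < L → -(d * deriv (deriv v) x) - c * deriv v x
      = A x * v x - b * v x ^ 2)
    (hvL : v L = 0)
    (hL : l₀ + 2 ≤ L) :
    -(4 * ((24 * d + 4 * c + 2 * a) / b)) / (L - l₀) ≤ deriv v L ∧ deriv v L ≤ 0 := by
  obtain ⟨hD1, hD2⟩ := my_infra hC
  set lam : ℝ := (24 * d + 4 * c + 2 * a) / b with hlamdef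
  have hlampos : 0 < lam := by positivity
  have hLl₀ : 0 < L - l₀ := by linarith
  set p : ℝ := l₀ + (L - l₀) / 4 with hpdef
  set p' : ℝ := l₀ + (L - l₀) / 2 with hp'def
  have hl₀p : l₀ < p := by rw [hpdef]; linarith
  have hpp' : p < p' := by rw [hpdef, hp'def]; linarith
  have hp'L : p' < L := by rw [hp'def]; linarith
  have hpL1 : p + 1 < L := by rw [hpdef]; linarith
  have hvp : v p ≤ lam := my_barrier hd hb hc ha hA hpos hC hode hpL1
  -- the function w = e^{(c/d)x} v' is monotone on (l₀, L)
  set w : ℝ → ℝ := fun x => Real.exp (c / d * x) * deriv v x with hwdef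
  have hw : ∀ x ∈ Ioo l₀ L, HasDerivAt w
      (Real.exp (c / d * x) * (c / d * deriv v x + deriv (deriv v) x)) x := by
    intro x hx
    have hexp : HasDerivAt (fun x : ℝ => Real.exp (c / d * x))
        (Real.exp (c / d * x) * (c / d * 1)) x :=
      ((hasDerivAt_id x).const_mul (c / d)).exp
    have := hexp.mul (hD2 x hx.2)
    refine this.congr_deriv ?_
    ring
  have hwmono : MonotoneOn w (Ioo l₀ L) := by
    apply monotoneOn_of_deriv_nonneg (convex_Ioo _ _)
    · exact fun x hx => (hw x hx).differentiableAt.continuousAt.continuousWithinAt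
    · intro x hx
      rw [interior_Ioo] at hx
      exact (hw x hx).differentiableAt.differentiableWithinAt
    · intro x hx
      rw [interior_Ioo] at hx
      rw [(hw x hx).deriv]
      have hAx : A x = a₀ := hApos x hx.1.le
      have hox := hode x hx.2
      rw [hAx] at hox
      have hvx := hpos x hx.2
      have hsum : 0 ≤ c * deriv v x + d * deriv (deriv v) x := by nlinarith
      have : 0 ≤ c / d * deriv v x + deriv (deriv v) x := by
        have heq : c / d * deriv v x + deriv (deriv v) x
            = (c * deriv v x + d * deriv (deriv v) x) / d := by field_simp
        rw [heq]
        exact div_nonneg hsum hd.le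
      exact mul_nonneg (Real.exp_pos _).le this
  -- v' ≤ 0 on (l₀, L)
  have hvle : ∀ x ∈ Ioo l₀ L, deriv v x ≤ 0 := by
    intro x hx
    by_contra h
    push_neg at h
    have hwx : 0 < w x := mul_pos (Real.exp_pos _) h
    have hmono : StrictMonoOn v (Icc x L) := by
      apply strictMonoOn_of_deriv_pos (convex_Icc _ _)
      · exact hC.continuousOn.mono (Icc_subset_Iic_self)
      · intro t ht
        rw [interior_Icc] at ht
        have htI : t ∈ Ioo l₀ L := ⟨lt_trans hx.1 ht.1, ht.2⟩
        have hwt : w x ≤ w t := hwmono hx htI ht.1.le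
        have hwtpos : 0 < w t := lt_of_lt_of_le hwx hwt
        by_contra hneg
        push_neg at hneg
        have : w t ≤ 0 := mul_nonpos_of_nonneg_of_nonpos (Real.exp_pos _).le hneg
        linarith
    have hlt : v x < v L := hmono ⟨le_refl x, hx.2.le⟩ ⟨hx.2.le, le_refl L⟩ hx.2
    rw [hvL] at hlt
    exact absurd hlt (not_lt.mpr (hpos x hx.2).le)
  -- mean value theorem between p and p'
  have hcont : ContinuousOn v (Icc p p') :=
    hC.continuousOn.mono (fun y hy => le_trans hy.2 hp'L.le)
  have hdiffmvt : DifferentiableOn ℝ v (Ioo p p') := fun t ht =>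
    (hD1 t (by linarith [ht.2])).differentiableAt.differentiableWithinAt
  obtain ⟨ξ, hξmem, hξeq⟩ := exists_deriv_eq_slope v hpp' hcont hdiffmvt
  have hξI : ξ ∈ Ioo l₀ L := ⟨lt_trans hl₀p hξmem.1, lt_trans hξmem.2 hp'L⟩
  have hvp'pos : 0 < v p' := hpos p' hp'L
  have hppval : p' - p = (L - l₀) / 4 := by rw [hpdef, hp'def]; ring
  have hξlow : -(4 * lam) / (L - l₀) ≤ deriv v ξ := by
    rw [hξeq, hppval]
    rw [div_le_div_iff₀ hLl₀ (by linarith)]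
    nlinarith
  -- propagate along w
  have hprop : ∀ t ∈ Ioo ξ L, -(4 * lam) / (L - l₀) ≤ deriv v t := by
    intro t ht
    have htI : t ∈ Ioo l₀ L := ⟨lt_trans hξI.1 ht.1, ht.2⟩
    have hww : w ξ ≤ w t := hwmono hξI htI ht.1.le
    have hdξ : deriv v ξ ≤ 0 := hvle ξ hξI
    have hexple : Real.exp (c / d * ξ) ≤ Real.exp (c / d * t) := by
      apply Real.exp_le_exp.mpr
      have : 0 < c / d := by positivity
      nlinarith [ht.1]
    have h1 : Real.exp (c / d * t) * deriv v ξ ≤ Real.exp (c / d * ξ) * deriv v ξ :=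
      mul_le_mul_of_nonpos_right hexple hdξ
    have h2 : Real.exp (c / d * t) * deriv v ξ ≤ Real.exp (c / d * t) * deriv v t := by
      calc Real.exp (c / d * t) * deriv v ξ ≤ Real.exp (c / d * ξ) * deriv v ξ := h1
        _ = w ξ := rfl
        _ ≤ w t := hww
        _ = Real.exp (c / d * t) * deriv v t := rfl
    have h3 : deriv v ξ ≤ deriv v t :=
      le_of_mul_le_mul_left h2 (Real.exp_pos _)
    linarith
  -- conclude for deriv v L
  by_cases hdL : DifferentiableAt ℝ v L
  · have T : Tendsto (slope v L) (𝓝[<] L) (𝓝 (deriv v L)) :=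
      (hasDerivAt_iff_tendsto_slope.mp hdL.hasDerivAt).mono_left
        (nhdsWithin_mono L fun y (hy : y ∈ Iio L) => ne_of_lt hy)
    have hev : ∀ᶠ x in 𝓝[<] L,
        slope v L x ∈ Icc (-(4 * lam) / (L - l₀)) 0 := by
      filter_upwards [Ioo_mem_nhdsLT_of_mem (⟨hξI.2, le_refl L⟩ : L ∈ Ioc ξ L)] with x hx
      obtain ⟨hxξ, hxL⟩ := hx
      have hcont2 : ContinuousOn v (Icc x L) := hC.continuousOn.mono Icc_subset_Iic_self
      have hdiff2 : DifferentiableOn ℝ v (Ioo x L) := fun t ht =>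
        (hD1 t ht.2).differentiableAt.differentiableWithinAt
      obtain ⟨η, hηmem, hηeq⟩ := exists_deriv_eq_slope v hxL hcont2 hdiff2
      have hηξ : η ∈ Ioo ξ L := ⟨lt_trans hxξ hηmem.1, hηmem.2⟩
      have hslope : slope v L x = deriv v η := by
        rw [slope_def_field, hηeq, hvL]
        have hne : x - L ≠ 0 := by intro h0; linarith [hxL]
        have hne2 : L - x ≠ 0 := by intro h0; linarith [hxL]
        field_simp
        ring
      rw [hslope]
      exact ⟨hprop η hηξ, hvle η ⟨lt_trans hξI.1 hηξ.1, hηmem.2⟩⟩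
    constructor
    · exact ge_of_tendsto T (hev.mono fun x hx => hx.1)
    · exact le_of_tendsto T (hev.mono fun x hx => hx.2)
  · rw [deriv_zero_of_not_differentiableAt hdL]
    refine ⟨?_, le_refl 0⟩
    apply div_nonpos_of_nonpos_of_nonneg <;> [linarith; linarith]

set_option maxHeartbeats 1000000 in
theorem stmt3
    (d b c h₀ l₀ a a₀ : ℝ) (A μf : ℝ → ℝ) (K : ℝ≥0)
    (hd : 0 < d) (hb : 0 < b) (hc : 0 < c) (hh₀ : 0 < h₀) (hl₀ : 0 < l₀)
    (ha : 0 < a) (ha₀ : a₀ < 0)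
    (hAlip : LipschitzWith K A)
    (hAneg : ∀ ξ : ℝ, ξ ≤ 0 → A ξ = a) (hApos : ∀ ξ : ℝ, l₀ ≤ ξ → A ξ = a₀)
    (hAanti : StrictAntiOn A (Icc 0 l₀))
    (hμcont : ContinuousOn μf (Icc a₀ a)) (hμmono : MonotoneOn μf (Icc a₀ a))
    (hμpos : 0 < μf a₀) (hμle : μf a₀ ≤ μf a)
    (c₀ : ℝ) (q : ℝ → ℝ)
    (hc₀ : c₀ ∈ Ioo 0 (2 * Real.sqrt (a * d)))
    (hq : IsSemiWave d b a (μf a) c₀ q)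
    (hqlim : Tendsto q atBot (𝓝 (a / b)))
    (hq' : ∀ x : ℝ, x ≤ 0 → deriv q x < 0)
    (hcle : c ≤ c₀) :
    ∀ V : ℝ → ℝ → ℝ, (∀ L : ℝ, 0 ≤ L → IsVSol d b c A L (V L)) →
      Tendsto (fun L => deriv (V L) L) atTop (𝓝 0) ∧
      Tendsto (fun L => -μf (A L) * deriv (V L) L) atTop (𝓝 0) := by
  intro V hV
  have hAle : ∀ x, A x ≤ a := by
    intro x
    rcases le_or_gt x 0 with h | h
    · rw [hAneg x h]
    rcases le_or_gt l₀ x with h2 | h2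
    · rw [hApos x h2]; linarith
    · have := hAanti (left_mem_Icc.mpr hl₀.le) ⟨h.le, h2.le⟩ h
      rw [hAneg 0 (le_refl 0)] at this
      linarith
  set lam : ℝ := (24 * d + 4 * c + 2 * a) / b with hlamdef
  have hlampos : 0 < lam := by positivity
  have hbd : ∀ L, l₀ + 2 ≤ L →
      -(4 * lam) / (L - l₀) ≤ deriv (V L) L ∧ deriv (V L) L ≤ 0 := by
    intro L hL
    obtain ⟨h1, h2, h3, h4⟩ := hV L (by linarith)
    exact my_bound hd hb hc ha ha₀ hl₀ hAle hApos h1 h2 h3 h4 hL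
  have htend : Tendsto (fun L : ℝ => -(4 * lam) / (L - l₀)) atTop (𝓝 0) := by
    have h1 : Tendsto (fun L : ℝ => L - l₀) atTop atTop := by
      simpa [sub_eq_add_neg] using tendsto_atTop_add_const_right atTop (-l₀) tendsto_id
    have h2 : Tendsto (fun L : ℝ => (L - l₀)⁻¹) atTop (𝓝 0) := h1.inv_tendsto_atTop
    have h3 := h2.const_mul (-(4 * lam))
    rw [mul_zero] at h3
    refine h3.congr fun L => ?_
    rw [div_eq_mul_inv]
  have hfirst : Tendsto (fun L => deriv (V L) L) atTop (𝓝 0) := by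
    apply tendsto_of_tendsto_of_tendsto_of_le_of_le' htend tendsto_const_nhds
    · filter_upwards [eventually_ge_atTop (l₀ + 2)] with L hL
      exact (hbd L hL).1
    · filter_upwards [eventually_ge_atTop (l₀ + 2)] with L hL
      exact (hbd L hL).2
  refine ⟨hfirst, ?_⟩
  have h4 : Tendsto (fun L => -μf a₀ * deriv (V L) L) atTop (𝓝 (-μf a₀ * 0)) :=
    hfirst.const_mul (-μf a₀)
  rw [mul_zero] at h4
  apply h4.congr'
  filter_upwards [eventually_ge_atTop l₀] with L hL
  rw [hApos L hL]
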